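/- arXiv:1309.2891 — 3 statements merged into one kernel-verified Lean document; each statement's English description precedes it below -/
import Mathlib

section
/- For all α ∈ (0;π), the function γ(α) = -1 + (π/(α - sin α))·(α⁴/π⁴) + (π/(π - α + sin(π - α)))·((π-α)⁴/π⁴) satisfies γ(α) ≤ -α(π-α)(2π-α)/π³ < 0. -/
open Real

lemma key_sin_bound (x : ℝ) (h0 : 0 < x) (h1 : x < π) :
    Real.sin x * π^2 ≤ x * (π^2 - x^2) := by
  have hπ := Real.pi_pos
  rcases le_or_gt x 2 with hx | hx
  · -- use sin x = 2 sin(x/2) cos(x/2)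
    have hs : Real.sin x = 2 * Real.sin (x/2) * Real.cos (x/2) := by
      rw [← Real.sin_two_mul]; ring_nf
    have hs1 : Real.sin (x/2) ≤ x/2 := le_of_lt (Real.sin_lt (by linarith))
    have hs0 : 0 ≤ Real.sin (x/2) := Real.sin_nonneg_of_nonneg_of_le_pi (by linarith) (by linarith)
    have hc0 : 0 ≤ Real.cos (x/2) := Real.cos_nonneg_of_mem_Icc ⟨by linarith, by linarith⟩
    have habs : |x/2| ≤ 1 := by rw [abs_of_nonneg (by linarith)]; linarith
    have hcb := Real.cos_bound habs
    rw [abs_le] at hcb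
    have hc1 : Real.cos (x/2) ≤ 1 - (x/2)^2/2 + |x/2|^4 * (5/96) := by linarith [hcb.2]
    rw [abs_of_nonneg (by linarith : (0:ℝ) ≤ x/2)] at hc1
    have hπ3 : π > 3.14 := by linarith [Real.pi_gt_d6]
    have hsinx : Real.sin x ≤ x * (1 - (x/2)^2/2 + (x/2)^4 * (5/96)) := by
      calc Real.sin x = 2 * Real.sin (x/2) * Real.cos (x/2) := hs
        _ ≤ 2 * (x/2) * Real.cos (x/2) := by
            apply mul_le_mul_of_nonneg_right _ hc0
            linarith
        _ ≤ x * (1 - (x/2)^2/2 + (x/2)^4 * (5/96)) := by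
            have : 2 * (x/2) = x := by ring
            rw [this]
            exact mul_le_mul_of_nonneg_left hc1 (le_of_lt h0)
    have hx2 : x^2 ≤ 4 := by nlinarith
    have hπ2 : (9.8596:ℝ) ≤ π^2 := by nlinarith
    have e1 : 0 ≤ x^3 * (4 - x^2) * π^2 :=
      mul_nonneg (mul_nonneg (pow_nonneg h0.le 3) (by linarith)) (sq_nonneg π)
    have e2 : 0 ≤ x^3 * (π^2 - 9.8596) :=
      mul_nonneg (pow_nonneg h0.le 3) (by linarith)
    nlinarith [mul_le_mul_of_nonneg_right hsinx (sq_nonneg π), e1, e2]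
  · -- near π: sin x = sin (π - x) ≤ π - x
    have hs : Real.sin x = Real.sin (π - x) := (Real.sin_pi_sub x).symm
    have hlt : Real.sin (π - x) < π - x := Real.sin_lt (by linarith)
    have hπ4 : π < 3.15 := by linarith [Real.pi_lt_d2]
    have hπ3 : (3.14:ℝ) < π := by linarith [Real.pi_gt_d6]
    have h2 : Real.sin (π - x) * π^2 < (π - x) * π^2 :=
      mul_lt_mul_of_pos_right hlt (by positivity)
    have hin : 0 ≤ x^2 + π*x - π^2 := by
      nlinarith [mul_nonneg (by linarith : (0:ℝ) ≤ x - 2) hπ.le,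
        mul_nonneg (by linarith : (0:ℝ) ≤ 3.15 - π) hπ.le]
    nlinarith [h2, mul_nonneg (by linarith : (0:ℝ) ≤ π - x) hin]

theorem stmt_6 (α : ℝ) (h0 : 0 < α) (h1 : α < π) :
    (-1 + (π / (α - Real.sin α)) * (α^4 / π^4)
        + (π / (π - α + Real.sin (π - α))) * ((π - α)^4 / π^4)
      ≤ -(α * (π - α) * (2*π - α)) / π^3) ∧
    -(α * (π - α) * (2*π - α)) / π^3 < 0 := by
  have hπ := Real.pi_pos
  have hd1pos : 0 < α - Real.sin α := sub_pos.mpr (Real.sin_lt h0)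
  have hsnn : 0 ≤ Real.sin (π - α) :=
    Real.sin_nonneg_of_nonneg_of_le_pi (by linarith) (by linarith)
  have hd2pos : 0 < π - α + Real.sin (π - α) := by linarith
  have hkey := key_sin_bound α h0 h1
  have hd1 : α^3 ≤ (α - Real.sin α) * π^2 := by nlinarith
  have ht1 : (π / (α - Real.sin α)) * (α^4 / π^4) ≤ α / π := by
    rw [div_mul_div_comm, div_le_div_iff₀ (mul_pos hd1pos (by positivity)) hπ]
    nlinarith [mul_le_mul_of_nonneg_left hd1 (le_of_lt (mul_pos h0 (mul_pos hπ hπ)))]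
  have ht2 : (π / (π - α + Real.sin (π - α))) * ((π - α)^4 / π^4) ≤ (π - α)^3 / π^3 := by
    rw [div_mul_div_comm, div_le_div_iff₀ (mul_pos hd2pos (by positivity)) (by positivity)]
    have h4 : (0:ℝ) ≤ (π - α)^3 * π^4 := mul_nonneg (pow_nonneg (by linarith) 3) (by positivity)
    nlinarith [mul_le_mul_of_nonneg_left (le_add_of_nonneg_right hsnn : π - α ≤ π - α + Real.sin (π - α)) h4]
  constructor
  · have hid : -1 + α / π + (π - α)^3 / π^3 = -(α * (π - α) * (2*π - α)) / π^3 := by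
      field_simp
      ring
    linarith [ht1, ht2, hid.le, hid.ge]
  · have hnum : 0 < α * (π - α) * (2*π - α) := by
      apply mul_pos (mul_pos h0 (by linarith)) (by linarith)
    have : 0 < π^3 := by positivity
    exact div_neg_of_neg_of_pos (by linarith) this
end

section
/- For all α ∈ (0; π), the inequality α - sin α ≥ α³/π² holds. -/
open Real

/-! Below `α = 2` the fifth-order Taylor bound `sin α ≤ α - α³/6 + α⁵/120` gives
`α - sin α ≥ 2α³/15 ≥ α³/π²`. Above it, `sin α = sin (π - α) ≤ π - α` gives `α - sin α ≥ 2α - π`,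
and `π²(2α - π) - α³ = (π - α)(α² + πα - π²)` is nonnegative as soon as `α ≥ (√5 - 1)π/2 ≈ 1.94`. -/

lemma le_of_hasDerivAt_le {f g f' g' : ℝ → ℝ} {a x : ℝ} (hf : ∀ y, HasDerivAt f (f' y) y)
    (hg : ∀ y, HasDerivAt g (g' y) y) (ha : f a ≤ g a) (hderiv : ∀ y, a ≤ y → f' y ≤ g' y)
    (hx : a ≤ x) : f x ≤ g x :=
  image_le_of_deriv_right_le_deriv_boundary (fun y _ => (hf y).continuousAt.continuousWithinAt)
    (fun y _ => (hf y).hasDerivWithinAt) ha (fun y _ => (hg y).continuousAt.continuousWithinAt)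
    (fun y _ => (hg y).hasDerivWithinAt) (fun y hy => hderiv y hy.1) ⟨hx, le_rfl⟩

lemma cos_le_one_sub_sq_add_pow_four {x : ℝ} (hx : 0 ≤ x) :
    cos x ≤ 1 - x ^ 2 / 2 + x ^ 4 / 24 := by
  refine le_of_hasDerivAt_le (g := fun y => 1 - y ^ 2 / 2 + y ^ 4 / 24)
    (g' := fun y => -y + y ^ 3 / 6) hasDerivAt_cos (fun y => ?_) (by simp)
    (fun y hy => by linarith [sin_ge_sub_cube hy]) hx
  exact ((((hasDerivAt_id' y).pow 2).div_const 2).const_sub 1).add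
    (((hasDerivAt_id' y).pow 4).div_const 24) |>.congr_deriv (by ring)

lemma sin_le_sub_cube_add_pow_five {x : ℝ} (hx : 0 ≤ x) :
    sin x ≤ x - x ^ 3 / 6 + x ^ 5 / 120 := by
  refine le_of_hasDerivAt_le (g := fun y => y - y ^ 3 / 6 + y ^ 5 / 120)
    (g' := fun y => 1 - y ^ 2 / 2 + y ^ 4 / 24) hasDerivAt_sin (fun y => ?_) (by simp)
    (fun y hy => cos_le_one_sub_sq_add_pow_four hy) hx
  exact ((hasDerivAt_id' y).sub (((hasDerivAt_id' y).pow 3).div_const 6)).add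
    (((hasDerivAt_id' y).pow 5).div_const 120) |>.congr_deriv (by ring)

lemma pow_three_le_pi_sq_mul_sub_sin_of_le_two {α : ℝ} (h0 : 0 ≤ α) (h2 : α ≤ 2) :
    α ^ 3 ≤ π ^ 2 * (α - sin α) := by
  have hsin := sin_le_sub_cube_add_pow_five h0
  have hα3 : 0 ≤ α ^ 3 := by positivity
  have hpi_sq : 9 ≤ π ^ 2 := by nlinarith [pi_gt_three]
  have hα2 : α ^ 2 ≤ 4 := by nlinarith
  have hα5 : α ^ 5 ≤ 4 * α ^ 3 := by nlinarith
  have hlower : 2 / 15 * α ^ 3 ≤ α - sin α := by linarith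
  calc α ^ 3 ≤ 9 * (2 / 15 * α ^ 3) := by linarith
    _ ≤ π ^ 2 * (α - sin α) := by gcongr

lemma pow_three_le_pi_sq_mul_sub_sin_of_two_le {α : ℝ} (h2 : 2 ≤ α) (hπ : α ≤ π) :
    α ^ 3 ≤ π ^ 2 * (α - sin α) := by
  have hsin : sin α ≤ π - α := by simpa [sin_pi_sub] using sin_le (sub_nonneg.2 hπ)
  have hquad : 0 ≤ α ^ 2 + π * α - π ^ 2 := by nlinarith [pi_gt_three, pi_lt_d2]
  calc α ^ 3 ≤ π ^ 2 * (2 * α - π) := by nlinarith [mul_nonneg (sub_nonneg.2 hπ) hquad]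
    _ ≤ π ^ 2 * (α - sin α) := mul_le_mul_of_nonneg_left (by linarith) (by positivity)

theorem stmt_7 (α : ℝ) (h0 : 0 < α) (h1 : α < π) :
    α - Real.sin α ≥ α^3 / π^2 := by
  rw [ge_iff_le, div_le_iff₀ (by positivity), mul_comm]
  rcases le_total α 2 with h2 | h2
  · exact pow_three_le_pi_sq_mul_sub_sin_of_le_two h0.le h2
  · exact pow_three_le_pi_sq_mul_sub_sin_of_two_le h2 h1.le
end

section
/- Fix α ∈ (0;π) and κ < 0, and for k ≥ 2 define c_k = κ(2π)^{2k} + κ(κ-1)(2α)^{2k} - (κ-1)(2(π-α))^{2k}. If c_k ≤ 0 for some k ≥ 2, then c_{k+1} ≤ 0. -/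
open Real

theorem stmt_8 (α : ℝ) (h0 : 0 < α) (h1 : α < π) (κ : ℝ) (hκ : κ < 0)
    (c : ℕ → ℝ)
    (hc : ∀ k, c k = κ*(2*π)^(2*k) + κ*(κ-1)*(2*α)^(2*k) - (κ-1)*(2*(π-α))^(2*k))
    (k : ℕ) (hk : 2 ≤ k) (hck : c k ≤ 0) : c (k+1) ≤ 0 := by
  have hπ := Real.pi_pos
  rw [hc] at hck ⊢
  have hA : (0:ℝ) < 2*π := by linarith
  have hB : (0:ℝ) < 2*α := by linarith
  have hC : (0:ℝ) < 2*(π-α) := by linarith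
  have pB : ((2*α):ℝ)^2 ≤ (2*π)^2 := by nlinarith
  have pC : ((2*(π-α)):ℝ)^2 ≤ (2*π)^2 := by nlinarith
  have bpos : (0:ℝ) < (2*α)^(2*k) := pow_pos hB _
  have cpos : (0:ℝ) < (2*(π-α))^(2*k) := pow_pos hC _
  have apos : (0:ℝ) < (2*π)^(2*k) := pow_pos hA _
  have e : 2*(k+1) = 2*k + 2 := by ring
  rw [e, pow_add, pow_add, pow_add]
  have hκκ : 0 < κ*(κ-1) := by nlinarith
  nlinarith [mul_nonneg (mul_nonneg hκκ.le bpos.le) (sub_nonneg.2 pB),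
    mul_nonneg (mul_nonneg (by linarith : (0:ℝ) ≤ 1-κ) cpos.le) (sub_nonneg.2 pC),
    mul_nonneg (mul_nonneg (by positivity : (0:ℝ) ≤ (2*π)^2) apos.le) (le_of_lt hA),
    mul_nonpos_of_nonneg_of_nonpos (by positivity : (0:ℝ) ≤ (2*π)^2) hck]
end
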